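/- arXiv:math/0508110 — 4 statements merged into one kernel-verified Lean document; each statement's English description precedes it below -/
import Mathlib

section
/- For all integers k, ℓ ≥ 1 and r, s with r ≥ k, s ≥ 0 and r + s < k + ℓ, the coefficients f satisfy the recurrence f_{k+1,ℓ}^{r,s}(a) + f_{k,ℓ+1}^{r,s}(a) + (a_{k+1} + a_{ℓ+1}) f_{k,ℓ}^{r,s}(a) = 0, as an identity of polynomials in the parameters a_i. -/
open Finset

noncomputable section

/-- The polynomial ring `ℤ[a_2,a_3,…]`: the variable `j` is the parameter `a_{j+2}`. -/
abbrev ARing := MvPolynomial ℕ ℤ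

/-- The parameter `a_m` for `m ≥ 2`; `a_1 = 0`. -/
def av (m : ℕ) : ARing :=
  if 2 ≤ m then MvPolynomial.X (m - 2) else 0

/-- Elementary symmetric polynomial `e_j` in the parameters `a_m`, `m ∈ s`. -/
def esymA (s : Finset ℕ) (j : ℕ) : ARing :=
  ∑ t ∈ s.powersetCard j, ∏ m ∈ t, av m

/-- Complete homogeneous symmetric polynomial `h_m` in the parameters `a_i`, `i ∈ s`. -/
def hsymA (s : Finset ℕ) (m : ℕ) : ARing :=
  ∑ t ∈ s.sym m, ((t : Multiset ℕ).map av).prod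

/-- The coefficient `f_{k,ℓ}^{r,s}(a) = (−1)^{ℓ−s} Σ_{j=0}^{k+ℓ−r−s}
2 h_{k+ℓ−r−s−j}(a_{k+1},…,a_{r+1}) e_j(a_{s+2},…,a_ℓ)`. -/
def fco (k l r s : ℕ) : ARing :=
  (-1) ^ (l - s) *
    ∑ j ∈ range (k + l - r - s + 1),
      2 * hsymA (Icc (k + 1) (r + 1)) (k + l - r - s - j) * esymA (Icc (s + 2) l) j

/-! With `H_S(t) = Σ h_m(S) tᵐ = ∏_{i∈S} (1 - aᵢt)⁻¹` and `E_S(t) = Σ e_j(S) tʲ = ∏_{i∈S} (1 + aᵢt)`,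
removing `a_{k+1}` from the `h`-alphabet and adding `a_{ℓ+1}` to the `e`-alphabet give
`H' = (1 - a_{k+1}t) H` and `E' = (1 + a_{ℓ+1}t) E`, so `H'E - HE' + (a_{k+1} + a_{ℓ+1}) t HE = 0`.
Up to the common sign `(-1)^{ℓ-s}`, the recurrence is the coefficient of `t^{k+ℓ-r-s+1}` in this
identity. -/

namespace PowerSeries

variable {R : Type*} [CommRing R]

lemma mk_eq_mk_add_C_mul_X_mul_mk {F G K : ℕ → R} {x : R} (h0 : F 0 = G 0)
    (hsucc : ∀ m, F (m + 1) = G (m + 1) + x * K m) : mk F = mk G + C x * X * mk K := by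
  ext (_ | m)
  · simp [h0]
  · simp [hsucc, mul_assoc, coeff_succ_X_mul]

lemma coeff_mk_mul_mk (F G : ℕ → R) (n : ℕ) :
    coeff n (mk F * mk G) = ∑ j ∈ range (n + 1), F (n - j) * G j := by
  rw [mul_comm, coeff_mul,
    Nat.sum_antidiagonal_eq_sum_range_succ fun i j => coeff i (mk G) * coeff j (mk F)]
  simp [mul_comm]

end PowerSeries

open PowerSeries in
theorem sum_range_conv_recurrence {R : Type*} [CommRing R] {H H' E E' : ℕ → R} {x y : R}
    (hH0 : H 0 = H' 0) (hH : ∀ m, H (m + 1) = H' (m + 1) + x * H m)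
    (hE0 : E' 0 = E 0) (hE : ∀ j, E' (j + 1) = E (j + 1) + y * E j) (N : ℕ) :
    ∑ j ∈ range (N + 2), H' (N + 1 - j) * E j - ∑ j ∈ range (N + 2), H (N + 1 - j) * E' j
      + (x + y) * ∑ j ∈ range (N + 1), H (N - j) * E j = 0 := by
  have hHser := mk_eq_mk_add_C_mul_X_mul_mk hH0 hH
  have hEser := mk_eq_mk_add_C_mul_X_mul_mk hE0 hE
  have hser : PowerSeries.mk H' * PowerSeries.mk E - PowerSeries.mk H * PowerSeries.mk E'
      + (C x + C y) * X * (PowerSeries.mk H * PowerSeries.mk E) = 0 := by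
    linear_combination (-PowerSeries.mk E) * hHser - PowerSeries.mk H * hEser
  simpa [coeff_mk_mul_mk, add_mul, mul_assoc, coeff_succ_X_mul] using
    congrArg (coeff (N + 1)) hser

namespace Finset

variable {α : Type*} [DecidableEq α]

lemma filter_notMem_sym_insert {x : α} {S : Finset α} (hx : x ∉ S) (n : ℕ) :
    {t ∈ (insert x S).sym n | x ∉ t} = S.sym n := by
  ext t
  simp only [mem_filter, mem_sym_iff, mem_insert]
  refine ⟨fun ⟨h, hxt⟩ a ha => (h a ha).resolve_left ?_, fun h => ⟨fun a ha => .inr (h a ha), ?_⟩⟩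
  · rintro rfl
    exact hxt ha
  · exact fun hxt => hx (h x hxt)

lemma filter_mem_sym_insert_succ (x : α) (S : Finset α) (n : ℕ) :
    {t ∈ (insert x S).sym (n + 1) | x ∈ t} = ((insert x S).sym n).image (Sym.cons x) := by
  ext t
  simp only [mem_filter, mem_image, mem_sym_iff]
  constructor
  · rintro ⟨h, hxt⟩
    obtain ⟨u, rfl⟩ := Sym.exists_cons_of_mem hxt
    exact ⟨u, fun a ha => h a (Sym.mem_cons_of_mem ha), rfl⟩
  · rintro ⟨u, hu, rfl⟩
    refine ⟨fun a ha => ?_, Sym.mem_cons_self x u⟩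
    rcases Sym.mem_cons.1 ha with rfl | h
    exacts [mem_insert_self _ _, hu a h]

end Finset

lemma esymA_zero (S : Finset ℕ) : esymA S 0 = 1 := by
  simp [esymA]

lemma esymA_insert {x : ℕ} {S : Finset ℕ} (hx : x ∉ S) (j : ℕ) :
    esymA (insert x S) (j + 1) = esymA S (j + 1) + av x * esymA S j := by
  simp only [esymA, ← esymm_map_val, insert_val_of_notMem hx, Multiset.map_cons, Multiset.esymm,
    Multiset.powersetCard_cons, Multiset.map_add, Multiset.sum_add, Multiset.map_map,
    Function.comp_def, Multiset.prod_cons, Multiset.sum_map_mul_left]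

lemma esymA_Icc_add_one_right {a b : ℕ} (h : a ≤ b + 1) (j : ℕ) :
    esymA (Icc a (b + 1)) (j + 1) = esymA (Icc a b) (j + 1) + av (b + 1) * esymA (Icc a b) j := by
  rw [← insert_Icc_right_eq_Icc_add_one h, esymA_insert (by simp)]

lemma hsymA_zero (S : Finset ℕ) : hsymA S 0 = 1 := by
  simp only [hsymA, sym_zero, sum_singleton]
  rfl

lemma hsymA_insert {x : ℕ} {S : Finset ℕ} (hx : x ∉ S) (m : ℕ) :
    hsymA (insert x S) (m + 1) = hsymA S (m + 1) + av x * hsymA (insert x S) m := by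
  rw [hsymA, ← sum_filter_not_add_sum_filter _ (x ∈ ·), filter_notMem_sym_insert hx,
    filter_mem_sym_insert_succ, sum_image fun u _ v _ h => (Sym.cons_inj_right x u v).1 h,
    hsymA, hsymA, mul_sum]
  simp only [Sym.coe_cons, Multiset.map_cons, Multiset.prod_cons]

lemma hsymA_Icc_add_one_left {a b : ℕ} (h : a ≤ b) (m : ℕ) :
    hsymA (Icc a b) (m + 1) = hsymA (Icc (a + 1) b) (m + 1) + av a * hsymA (Icc a b) m := by
  rw [← insert_Icc_add_one_left_eq_Icc h, hsymA_insert (by simp), insert_Icc_add_one_left_eq_Icc h]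

theorem fco_recurrence_general (k l r s : ℕ) (hr : k ≤ r) (hrs : r + s < k + l) :
    fco (k + 1) l r s + fco k (l + 1) r s + (av (k + 1) + av (l + 1)) * fco k l r s = 0 := by
  set N := k + l - r - s
  have key := sum_range_conv_recurrence (x := av (k + 1)) (y := av (l + 1))
    (H := fun m => 2 * hsymA (Icc (k + 1) (r + 1)) m)
    (H' := fun m => 2 * hsymA (Icc (k + 1 + 1) (r + 1)) m)
    (E := esymA (Icc (s + 2) l)) (E' := esymA (Icc (s + 2) (l + 1)))
    (by simp only [hsymA_zero])
    (fun m => by simp only [hsymA_Icc_add_one_left (Nat.succ_le_succ hr)]; ring)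
    (by simp only [esymA_zero]) (esymA_Icc_add_one_right (by omega)) N
  have h1 : k + 1 + l - r - s = N + 1 := by omega
  have h2 : k + (l + 1) - r - s = N + 1 := by omega
  have h3 : l + 1 - s = l - s + 1 := by omega
  rw [fco, fco, fco, h1, h2, h3, pow_succ]
  linear_combination (-1 : ARing) ^ (l - s) * key

/-- For `k, ℓ ≥ 1`, `r ≥ k`, `s ≥ 0` with `r + s < k + ℓ`:
`f_{k+1,ℓ}^{r,s}(a) + f_{k,ℓ+1}^{r,s}(a) + (a_{k+1} + a_{ℓ+1}) f_{k,ℓ}^{r,s}(a) = 0`. -/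
theorem fco_recurrence (k l r s : ℕ) (hk : 1 ≤ k) (hl : 1 ≤ l)
    (hr : k ≤ r) (hrs : r + s < k + l) :
    fco (k + 1) l r s + fco k (l + 1) r s + (av (k + 1) + av (l + 1)) * fco k l r s = 0 :=
  fco_recurrence_general k l r s hr hrs

end
end

section
/- Let λ = (1^{e_1} 2^{e_2} ⋯ n^{e_n}) be a partition with all parts at most n that is not strict (i.e. e_k ≥ 2 for some k). Then in R_n, the monomial X^λ = X_1^{e_1} ⋯ X_n^{e_n} is an S-linear combination of the monomials X^μ with μ ∈ SP_n a strict partition satisfying μ ≺ λ in the graded reverse lexicographic order with X_1 ≺ X_2 ≺ ⋯ ≺ X_n. -/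
open Finset

noncomputable section

/-- The coefficient ring `S = ℤ[x_1,…,x_n]`. -/
abbrev Sring (n : ℕ) := MvPolynomial (Fin n) ℤ

/-- The polynomial ring `S[X_1,…,X_n]`; the variable of index `i : Fin n` is `X_{i+1}`. -/
abbrev PRing (n : ℕ) := MvPolynomial (Fin n) (Sring n)

/-- The substitution `ι_n : ℤ[a] → S` sending `a_j ↦ x_{n−j+2}` for `2 ≤ j ≤ n+1`
and `a_j ↦ 0` for `j > n+1` (0-indexed: variable `v`, i.e. `a_{v+2}`, goes to `x` with
0-indexed index `n−1−v` when `v < n`, and to `0` otherwise). -/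
def iotaA (n : ℕ) : ARing →+* Sring n :=
  MvPolynomial.eval₂Hom (Int.castRingHom (Sring n))
    (fun v => if h : v < n then MvPolynomial.X (⟨n - 1 - v, by omega⟩ : Fin n) else 0)

/-- The generator `X_k` of `S[X_1,…,X_n]` for `1 ≤ k ≤ n`, with the conventions
`X_0 = 1` and `X_j = 0` for `j > n`. -/
def XV (n : ℕ) (k : ℕ) : PRing n :=
  if h0 : k = 0 then 1
  else if h : k ≤ n then MvPolynomial.X (⟨k - 1, by omega⟩ : Fin n) else 0

/-- The relation `X_{k,k} = X_k² + 2 Σ_{i=1}^{min(n−k,k)} (−1)^i X_{k+i}X_{k−i}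
+ Σ_{r=k}^{min(n,2k−1)} Σ_{s=0}^{2k−1−r} ι_n(f_{k,k}^{r,s}(a)) X_r X_s`. -/
def XKK (n k : ℕ) : PRing n :=
  XV n k ^ 2 +
    2 * ∑ i ∈ Icc 1 (min (n - k) k), (-1) ^ i * XV n (k + i) * XV n (k - i) +
    ∑ r ∈ Icc k (min n (2 * k - 1)), ∑ s ∈ range (2 * k - 1 - r + 1),
      MvPolynomial.C (iotaA n (fco k k r s)) * XV n r * XV n s

/-- The ideal `I_n = ⟨X_{1,1},…,X_{n,n}⟩` of `S[X_1,…,X_n]`. -/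
def Irel (n : ℕ) : Ideal (PRing n) :=
  Ideal.span ((fun k => XKK n k) '' Set.Icc 1 n)

/-- For a partition `λ = (1^{e_1} ⋯ n^{e_n})` encoded by its exponent vector
`e : Fin n → ℕ` (the part `i+1` has multiplicity `e i`), the monomial
`X^λ = X_1^{e_1} ⋯ X_n^{e_n}`. -/
def Xmon (n : ℕ) (e : Fin n → ℕ) : PRing n :=
  ∏ i : Fin n, MvPolynomial.X i ^ e i

/-- The exponent vector of the squarefree monomial `X^μ` attached to a strict partition
`μ ∈ SP_n`, encoded by the set of its parts `μ : Fin n → Bool` (`μ i = true` iff `i+1`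
is a part). -/
def strictExp (n : ℕ) (μ : Fin n → Bool) : Fin n → ℕ :=
  fun i => if μ i then 1 else 0

/-- The graded reverse lexicographic order with `X_1 ≺ X_2 ≺ ⋯ ≺ X_n` on exponent
vectors: `e' ≺ e` iff the total degree of `e'` is smaller, or the degrees are equal and
at the smallest index where they differ, `e'` has the strictly larger exponent. -/
def grevlexLt (n : ℕ) (e' e : Fin n → ℕ) : Prop :=
  (∑ i : Fin n, e' i < ∑ i : Fin n, e i) ∨
    ((∑ i : Fin n, e' i = ∑ i : Fin n, e i) ∧
      ∃ k : Fin n, (∀ i : Fin n, i < k → e' i = e i) ∧ e k < e' k)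

/-!
The relation `X_{k,k}` expresses `X_k²` in `R_n` as an `S`-combination of products `X_r X_s`
with `r ≥ k > s` (where `X_0 = 1`), each grevlex-smaller than `X_k²`. Grevlex is compatible with
multiplication, so any monomial with a repeated factor `X_k²` is a combination of smaller
monomials, and since grevlex is well founded, repeating the reduction ends in squarefree
monomials, i.e. those of strict partitions.
-/

namespace NonstrictMonomialReduction

open MvPolynomial Submodule

variable {n : ℕ}

theorem grevlexLt_trans {a b c : Fin n → ℕ} (hab : grevlexLt n a b) (hbc : grevlexLt n b c) :
    grevlexLt n a c := by
  rcases hab with hab | ⟨hab, i, hi, hai⟩ <;> rcases hbc with hbc | ⟨hbc, j, hj, hbj⟩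
  · exact Or.inl (hab.trans hbc)
  · exact Or.inl (hbc ▸ hab)
  · exact Or.inl (hab ▸ hbc)
  · refine Or.inr ⟨hab.trans hbc, min i j, fun l hl => ?_, ?_⟩
    · exact (hi l (lt_min_iff.mp hl).1).trans (hj l (lt_min_iff.mp hl).2)
    · rcases lt_trichotomy i j with hij | rfl | hji
      · rw [min_eq_left hij.le, ← hj i hij]; exact hai
      · rw [min_self]; exact hbj.trans hai
      · rw [min_eq_right hji.le, hi j hji]; exact hbj

theorem grevlexLt_add_right {a b : Fin n → ℕ} (c : Fin n → ℕ) (h : grevlexLt n a b) :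
    grevlexLt n (a + c) (b + c) := by
  simp only [grevlexLt, Pi.add_apply, sum_add_distrib] at h ⊢
  rcases h with h | ⟨hdeg, k, hk, hlt⟩
  · exact Or.inl (by omega)
  · exact Or.inr ⟨by omega, k, fun i hi => by rw [hk i hi], by omega⟩

/-- Grevlex compares `(deg e, (deg e - e i)_i)` lexicographically. -/
def grevlexKey (e : Fin n → ℕ) : ℕ ×ₗ Lex (Fin n → ℕ) :=
  toLex (∑ i, e i, toLex fun i => ∑ j, e j - e i)

theorem grevlexKey_lt {a b : Fin n → ℕ} (h : grevlexLt n a b) : grevlexKey a < grevlexKey b := by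
  rw [grevlexKey, grevlexKey, Prod.Lex.toLex_lt_toLex]
  rcases h with h | ⟨hdeg, k, hk, hlt⟩
  · exact Or.inl h
  · refine Or.inr ⟨hdeg, k, fun i hi => by rw [hdeg]; exact congrArg _ (hk i hi), ?_⟩
    have : a k ≤ ∑ j, a j := single_le_sum (fun j _ => Nat.zero_le (a j)) (mem_univ k)
    show ∑ j, a j - a k < ∑ j, b j - b k
    omega

theorem grevlexLt_wellFounded : WellFounded (grevlexLt n) :=
  Subrelation.wf grevlexKey_lt (InvImage.wf grevlexKey wellFounded_lt)

theorem Xmon_add (e f : Fin n → ℕ) : Xmon n (e + f) = Xmon n e * Xmon n f := by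
  simp only [Xmon, Pi.add_apply, pow_add, prod_mul_distrib]

theorem Xmon_single (i : Fin n) (m : ℕ) : Xmon n (Pi.single i m) = X i ^ m := by
  rw [Xmon, prod_eq_single i (fun j _ hj => by rw [Pi.single_eq_of_ne hj, pow_zero]) (by simp),
    Pi.single_eq_same]

def xvExp (n a : ℕ) : Fin n → ℕ :=
  if h : 0 < a ∧ a ≤ n then Pi.single ⟨a - 1, by omega⟩ 1 else 0

theorem XV_eq_Xmon {a : ℕ} (h : a ≤ n) : XV n a = Xmon n (xvExp n a) := by
  rcases Nat.eq_zero_or_pos a with rfl | ha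
  · simp [XV, xvExp, Xmon]
  · rw [XV, xvExp, dif_neg ha.ne', dif_pos h, dif_pos ⟨ha, h⟩, Xmon_single, pow_one]

theorem grevlexLt_xvExp_add_xvExp (k : Fin n) {r s : ℕ} (hr : k.1 < r) (hrn : r ≤ n)
    (hs : s ≤ k.1) : grevlexLt n (xvExp n r + xvExp n s) (Pi.single k 2) := by
  have hr0 : 0 < r := by omega
  rcases Nat.eq_zero_or_pos s with rfl | hs0
  · left
    simp [xvExp, hr0, hrn]
  · have hsn : s ≤ n := by omega
    right
    refine ⟨?_, ⟨s - 1, by omega⟩, fun i hi => ?_, ?_⟩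
    · simp [xvExp, hr0, hrn, hs0, hsn, sum_add_distrib]
    · simp only [Fin.lt_def] at hi
      simp [xvExp, hr0, hrn, hs0, hsn, Pi.single_apply, Fin.ext_iff]
      split_ifs <;> omega
    · simp [xvExp, hr0, hrn, hs0, hsn, Pi.single_apply, Fin.ext_iff]
      split_ifs <;> omega

abbrev qmon (n : ℕ) (e : Fin n → ℕ) : PRing n ⧸ Irel n := Ideal.Quotient.mk (Irel n) (Xmon n e)

def lowerSpan (e : Fin n → ℕ) : Submodule (Sring n) (PRing n ⧸ Irel n) :=
  span (Sring n) (qmon n '' {f | grevlexLt n f e})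

def strictLowerSpan (e : Fin n → ℕ) : Submodule (Sring n) (PRing n ⧸ Irel n) :=
  span (Sring n) ((fun μ => qmon n (strictExp n μ)) '' {μ | grevlexLt n (strictExp n μ) e})

theorem qmon_mem_lowerSpan_of_lt {e f : Fin n → ℕ} (h : grevlexLt n f e) :
    qmon n f ∈ lowerSpan e :=
  subset_span ⟨f, h, rfl⟩

theorem mul_qmon_mem_lowerSpan {e : Fin n → ℕ} {x : PRing n ⧸ Irel n} (hx : x ∈ lowerSpan e)
    (g : Fin n → ℕ) : x * qmon n g ∈ lowerSpan (e + g) := by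
  have : lowerSpan e ≤ (lowerSpan (e + g)).comap (LinearMap.mulRight (Sring n) (qmon n g)) := by
    refine span_le.mpr ?_
    rintro _ ⟨f, hf, rfl⟩
    simpa only [SetLike.mem_coe, mem_comap, LinearMap.mulRight_apply, qmon, ← map_mul,
      ← Xmon_add] using
      qmon_mem_lowerSpan_of_lt (grevlexLt_add_right g hf)
  exact this hx

theorem mk_C_mul_XV_mul_XV_mem_lowerSpan (k : Fin n) (c : Sring n) {r s : ℕ} (hr : k.1 < r)
    (hrn : r ≤ n) (hs : s ≤ k.1) :
    Ideal.Quotient.mk (Irel n) (C c * (XV n r * XV n s)) ∈ lowerSpan (Pi.single k 2) := by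
  rw [XV_eq_Xmon hrn, XV_eq_Xmon (hs.trans k.2.le), ← Xmon_add, map_mul, ← algebraMap_eq,
    Ideal.Quotient.mk_algebraMap, ← Algebra.smul_def]
  exact smul_mem _ c (qmon_mem_lowerSpan_of_lt (grevlexLt_xvExp_add_xvExp k hr hrn hs))

theorem qmon_single_two_mem_lowerSpan (k : Fin n) :
    qmon n (Pi.single k 2) ∈ lowerSpan (Pi.single k 2) := by
  set K := k.1 + 1
  have hXK : XV n K = X k := by simp [XV, K, k.2]
  have hrel : Ideal.Quotient.mk (Irel n) (XKK n K) = 0 :=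
    Ideal.Quotient.eq_zero_iff_mem.mpr (Ideal.subset_span ⟨K, ⟨by omega, k.2⟩, rfl⟩)
  rw [XKK, map_add, map_add, add_assoc, ← eq_neg_iff_add_eq_zero] at hrel
  rw [qmon, Xmon_single, ← hXK, hrel]
  refine neg_mem (add_mem ?_ ?_)
  · rw [mul_sum, map_sum]
    refine sum_mem fun i hi => ?_
    rw [mem_Icc] at hi
    have : 2 * ((-1) ^ i * XV n (K + i) * XV n (K - i)) =
        C (2 * (-1) ^ i) * (XV n (K + i) * XV n (K - i)) := by
      rw [map_mul, map_pow, map_neg, map_one, map_ofNat]; ring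
    rw [this]
    exact mk_C_mul_XV_mul_XV_mem_lowerSpan k _ (by omega) (by omega) (by omega)
  · rw [map_sum]
    refine sum_mem fun r hr => ?_
    rw [map_sum]
    refine sum_mem fun s hs => ?_
    simp only [mem_Icc, mem_range] at hr hs
    rw [mul_assoc]
    exact mk_C_mul_XV_mul_XV_mem_lowerSpan k _ (by omega) (hr.2.trans (min_le_left _ _))
      (by omega)

theorem qmon_mem_lowerSpan_of_two_le {e : Fin n → ℕ} {k : Fin n} (hk : 2 ≤ e k) :
    qmon n e ∈ lowerSpan e := by
  have he : e = Pi.single k 2 + (e - Pi.single k 2) := by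
    funext i
    by_cases hi : i = k
    · subst hi; simp; omega
    · simp [Pi.single_eq_of_ne hi]
  rw [he, qmon, Xmon_add, map_mul]
  exact mul_qmon_mem_lowerSpan (qmon_single_two_mem_lowerSpan k) _

theorem exists_strictExp_eq {e : Fin n → ℕ} (h : ∀ i, e i < 2) : ∃ μ, strictExp n μ = e :=
  ⟨fun i => decide (e i = 1), funext fun i => by
    have := h i
    simp only [strictExp, decide_eq_true_eq]
    split_ifs <;> omega⟩

theorem strictLowerSpan_mono {e f : Fin n → ℕ} (h : grevlexLt n f e) :
    strictLowerSpan f ≤ strictLowerSpan e :=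
  span_mono (Set.image_mono fun _ hμ => grevlexLt_trans hμ h)

theorem qmon_mem_strictLowerSpan (e : Fin n → ℕ) (he : ∃ k, 2 ≤ e k) :
    qmon n e ∈ strictLowerSpan e := by
  induction e using grevlexLt_wellFounded.induction with
  | _ e ih =>
  obtain ⟨k, hk⟩ := he
  refine span_le.mpr ?_ (qmon_mem_lowerSpan_of_two_le hk)
  rintro _ ⟨f, hf, rfl⟩
  by_cases hf2 : ∃ i, 2 ≤ f i
  · exact strictLowerSpan_mono hf (ih f hf hf2)
  · simp only [not_exists, not_le] at hf2
    obtain ⟨μ, rfl⟩ := exists_strictExp_eq hf2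
    exact subset_span ⟨μ, hf, rfl⟩

end NonstrictMonomialReduction

open NonstrictMonomialReduction

theorem nonstrict_monomial_reduction_general (n : ℕ) (e : Fin n → ℕ)
    (he : ∃ k : Fin n, 2 ≤ e k) :
    ∃ c : (Fin n → Bool) → Sring n,
      Ideal.Quotient.mk (Irel n) (Xmon n e) =
        ∑ μ : Fin n → Bool,
          algebraMap (Sring n) (PRing n ⧸ Irel n) (c μ) *
            Ideal.Quotient.mk (Irel n) (Xmon n (strictExp n μ)) ∧
      ∀ μ : Fin n → Bool, c μ ≠ 0 → grevlexLt n (strictExp n μ) e := by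
  obtain ⟨c, hc, hsum⟩ :=
    (Finsupp.mem_span_image_iff_linearCombination _).mp (qmon_mem_strictLowerSpan e he)
  refine ⟨c, ?_, fun μ hμ => (Finsupp.mem_supported _ _).mp hc (Finsupp.mem_support_iff.mpr hμ)⟩
  show qmon n e = _
  rw [← hsum, Finsupp.linearCombination_apply, Finsupp.sum_fintype _ _ (by simp)]
  exact sum_congr rfl fun μ _ => Algebra.smul_def (c μ) (qmon n (strictExp n μ))

/-- Let `λ = (1^{e_1} ⋯ n^{e_n})` be a partition with all parts at most `n` that is not
strict (`e_k ≥ 2` for some `k`).  Then in `R_n = S[X_1,…,X_n]/I_n`, the monomial `X^λ`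
is an `S`-linear combination of the monomials `X^μ` with `μ ∈ SP_n` strict and
`μ ≺ λ` in the graded reverse lexicographic order with `X_1 ≺ ⋯ ≺ X_n`. -/
theorem nonstrict_monomial_reduction (n : ℕ) (hn : 1 ≤ n) (e : Fin n → ℕ)
    (he : ∃ k : Fin n, 2 ≤ e k) :
    ∃ c : (Fin n → Bool) → Sring n,
      Ideal.Quotient.mk (Irel n) (Xmon n e) =
        ∑ μ : Fin n → Bool,
          algebraMap (Sring n) (PRing n ⧸ Irel n) (c μ) *
            Ideal.Quotient.mk (Irel n) (Xmon n (strictExp n μ)) ∧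
      ∀ μ : Fin n → Bool, c μ ≠ 0 → grevlexLt n (strictExp n μ) e :=
  nonstrict_monomial_reduction_general n e he

end
end

section
/- The monomials X^λ for λ ∈ SP_n generate R_n as a module over S = ℤ[x_1,…,x_n]. -/
open Finset

noncomputable section

/-! Give `X_k` the weight `k + 1` (so that `X_0 = 1` has weight `1`) and a monomial the product
of the weights of its factors. The relation `X_{k,k}` writes `X_k²` as an `S`-combination of
products `X_a X_b` with `a + b ≤ 2k` and `(a, b) ≠ (k, k)`, all of strictly smaller weight
`(a + 1)(b + 1) < (k + 1)²`. So modulo `I_n` a monomial with a repeated factor is an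
`S`-combination of monomials of smaller weight, and induction on the weight leaves only the
squarefree monomials `X^λ`, `λ ∈ SP_n`. -/

theorem Nat.add_one_mul_add_one_lt_sq {a b k : ℕ} (h : a + b ≤ 2 * k) (hne : (a, b) ≠ (k, k)) :
    (a + 1) * (b + 1) < (k + 1) ^ 2 := by
  have hne' : a ≠ b ∨ a + b < 2 * k := by
    by_contra! hc
    exact hne (by ext <;> simp <;> omega)
  rcases hne' with hab | hlt
  · rcases Nat.lt_or_gt_of_ne hab with hab | hab <;> nlinarith
  · nlinarith [sq_nonneg ((a : ℤ) - b)]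

theorem Fintype.prod_pow_add_single {ι M : Type*} [Fintype ι] [DecidableEq ι] [CommMonoid M]
    (f : ι → M) (e : ι → ℕ) (k : ι) (m : ℕ) :
    ∏ i, f i ^ (e + Pi.single k m : ι → ℕ) i = (∏ i, f i ^ e i) * f k ^ m := by
  simp only [Pi.add_apply, pow_add, prod_mul_distrib]
  congr 1
  rw [Fintype.prod_eq_single k fun i hi => by simp [hi]]
  simp

variable {n : ℕ}

def monWeight (n : ℕ) (e : Fin n → ℕ) : ℕ :=
  ∏ i : Fin n, ((i : ℕ) + 2) ^ e i

def strictSpan (n : ℕ) : Submodule (Sring n) (PRing n ⧸ Irel n) :=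
  Submodule.span (Sring n)
    (Set.range fun μ : Fin n → Bool => Ideal.Quotient.mk (Irel n) (Xmon n (strictExp n μ)))

def productsBelow (n k : ℕ) : Submodule (Sring n) (PRing n) :=
  Submodule.span (Sring n) {p | ∃ a b, (a + 1) * (b + 1) < (k + 1) ^ 2 ∧ XV n a * XV n b = p}

theorem XV_of_lt {a : ℕ} (h : n < a) : XV n a = 0 := by
  rw [XV, dif_neg (by omega), dif_neg (by omega)]

theorem XV_succ (k : Fin n) : XV n (k + 1) = MvPolynomial.X k := by
  rw [XV, dif_neg (by omega), dif_pos (show (k : ℕ) + 1 ≤ n from k.isLt)]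
  rfl

theorem XKK_mem_Irel {k : ℕ} (h1 : 1 ≤ k) (hn : k ≤ n) : XKK n k ∈ Irel n :=
  Ideal.subset_span ⟨k, ⟨h1, hn⟩, rfl⟩

theorem Xmon_add_single (e : Fin n → ℕ) (k : Fin n) (m : ℕ) :
    Xmon n (e + Pi.single k m) = Xmon n e * MvPolynomial.X k ^ m :=
  Fintype.prod_pow_add_single _ e k m

theorem monWeight_add_single (e : Fin n → ℕ) (k : Fin n) (m : ℕ) :
    monWeight n (e + Pi.single k m) = monWeight n e * ((k : ℕ) + 2) ^ m :=
  Fintype.prod_pow_add_single _ e k m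

theorem exists_Xmon_mul_XV (e : Fin n → ℕ) {a : ℕ} (ha : a ≤ n) :
    ∃ e', Xmon n e * XV n a = Xmon n e' ∧ monWeight n e' = monWeight n e * (a + 1) := by
  rcases a with _ | a
  · exact ⟨e, by simp [XV]⟩
  · refine ⟨e + Pi.single ⟨a, ha⟩ 1, ?_, ?_⟩
    · rw [Xmon_add_single, pow_one, ← XV_succ ⟨a, ha⟩]
    · rw [monWeight_add_single, pow_one]

theorem XKK_sub_sq_mem_productsBelow {k : ℕ} (hk : 1 ≤ k) :
    XKK n k - XV n k ^ 2 ∈ productsBelow n k := by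
  have hmem : ∀ a b, a + b ≤ 2 * k → (a, b) ≠ (k, k) → XV n a * XV n b ∈ productsBelow n k :=
    fun a b h hne => Submodule.subset_span ⟨a, b, Nat.add_one_mul_add_one_lt_sq h hne, rfl⟩
  rw [XKK, add_assoc, add_sub_cancel_left]
  refine add_mem ?_ (Submodule.sum_mem _ fun r hr => Submodule.sum_mem _ fun s hs => ?_)
  · rw [mul_sum]
    refine Submodule.sum_mem _ fun i hi => ?_
    rw [mem_Icc] at hi
    have h : (2 * (-1) ^ i * XV n (k + i) * XV n (k - i) : PRing n)
        = (2 * (-1) ^ i : ℤ) • (XV n (k + i) * XV n (k - i)) := by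
      rw [zsmul_eq_mul]; push_cast; ring
    rw [← mul_assoc, ← mul_assoc, h]
    exact Submodule.smul_of_tower_mem _ _ (hmem _ _ (by omega) (by simp only [ne_eq, Prod.mk.injEq]; omega))
  · rw [mem_Icc] at hr
    rw [mem_range] at hs
    rw [mul_assoc, ← MvPolynomial.smul_eq_C_mul]
    exact Submodule.smul_mem _ _ (hmem _ _ (by omega) (by simp only [ne_eq, Prod.mk.injEq]; omega))

theorem mk_Xmon_mem_strictSpan_of_le_one {e : Fin n → ℕ} (he : ∀ i, e i ≤ 1) :
    Ideal.Quotient.mk (Irel n) (Xmon n e) ∈ strictSpan n := by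
  have h : strictExp n (fun i => decide (e i = 1)) = e := by
    funext i
    rcases Nat.le_one_iff_eq_zero_or_eq_one.1 (he i) with h | h <;> simp [strictExp, h]
  rw [← h]
  exact Submodule.subset_span ⟨_, rfl⟩

theorem mk_Xmon_mul_mem_strictSpan {e₀ : Fin n → ℕ} {k : ℕ}
    (ih : ∀ e, monWeight n e < monWeight n e₀ * (k + 1) ^ 2 →
      Ideal.Quotient.mk (Irel n) (Xmon n e) ∈ strictSpan n)
    {p : PRing n} (hp : p ∈ productsBelow n k) :
    Ideal.Quotient.mk (Irel n) (Xmon n e₀ * p) ∈ strictSpan n := by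
  let φ : PRing n →ₗ[Sring n] PRing n ⧸ Irel n :=
    (Ideal.Quotient.mkₐ (Sring n) (Irel n)).toLinearMap ∘ₗ LinearMap.mulLeft (Sring n) (Xmon n e₀)
  suffices productsBelow n k ≤ (strictSpan n).comap φ from this hp
  refine Submodule.span_le.2 ?_
  rintro _ ⟨a, b, hab, rfl⟩
  change Ideal.Quotient.mk (Irel n) (Xmon n e₀ * (XV n a * XV n b)) ∈ strictSpan n
  obtain ha | ha := lt_or_ge n a
  · simp [XV_of_lt ha]
  obtain hb | hb := lt_or_ge n b
  · simp [XV_of_lt hb]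
  obtain ⟨e₁, h₁, hw₁⟩ := exists_Xmon_mul_XV e₀ ha
  obtain ⟨e₂, h₂, hw₂⟩ := exists_Xmon_mul_XV e₁ hb
  rw [← mul_assoc, h₁, h₂]
  refine ih e₂ ?_
  rw [hw₂, hw₁, mul_assoc]
  exact Nat.mul_lt_mul_of_pos_left hab (Finset.prod_pos fun i _ => by positivity)

theorem mk_Xmon_mem_strictSpan (e : Fin n → ℕ) :
    Ideal.Quotient.mk (Irel n) (Xmon n e) ∈ strictSpan n := by
  induction hw : monWeight n e using Nat.strong_induction_on generalizing e with
  | _ w ih =>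
  by_cases hsq : ∀ i, e i ≤ 1
  · exact mk_Xmon_mem_strictSpan_of_le_one hsq
  push Not at hsq
  obtain ⟨k, hk⟩ := hsq
  obtain ⟨e₀, rfl⟩ : ∃ e₀, e = e₀ + Pi.single k 2 :=
    ⟨e - Pi.single k 2, (tsub_add_cancel_of_le fun i => by
      rcases eq_or_ne i k with rfl | h
      exacts [by simpa using Nat.succ_le_of_lt hk, by simp [h]]).symm⟩
  have hK : XKK n (k + 1) ∈ Irel n := XKK_mem_Irel (by omega) k.isLt
  have hreduce : Ideal.Quotient.mk (Irel n) (Xmon n (e₀ + Pi.single k 2)) =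
      Ideal.Quotient.mk (Irel n) (Xmon n e₀ * -(XKK n (k + 1) - XV n (k + 1) ^ 2)) := by
    rw [neg_sub, mul_sub, map_sub, Ideal.Quotient.eq_zero_iff_mem.2 (Ideal.mul_mem_left _ _ hK),
      sub_zero, XV_succ, Xmon_add_single]
  rw [hreduce]
  refine mk_Xmon_mul_mem_strictSpan (fun e' he' => ih _ ?_ e' rfl)
    (neg_mem (XKK_sub_sq_mem_productsBelow (by omega)))
  rwa [← hw, monWeight_add_single]

theorem strict_monomials_span_general (n : ℕ) :
    Submodule.span (Sring n)
        (Set.range fun μ : Fin n → Bool =>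
          Ideal.Quotient.mk (Irel n) (Xmon n (strictExp n μ))) = ⊤ := by
  refine eq_top_iff.2 fun x _ => ?_
  obtain ⟨p, rfl⟩ := Ideal.Quotient.mk_surjective x
  rw [← MvPolynomial.support_sum_monomial_coeff p, map_sum]
  refine Submodule.sum_mem _ fun d _ => ?_
  rw [MvPolynomial.monomial_eq, ← MvPolynomial.smul_eq_C_mul, ← Ideal.Quotient.mkₐ_eq_mk (Sring n),
    map_smul]
  refine Submodule.smul_mem _ _ ?_
  rw [Finsupp.prod_fintype _ _ fun i => pow_zero _]
  exact mk_Xmon_mem_strictSpan d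

/-- The monomials `X^λ` for `λ ∈ SP_n` (strict partitions, encoded by their sets of
parts `μ : Fin n → Bool`) generate `R_n = S[X_1,…,X_n]/I_n` as a module over
`S = ℤ[x_1,…,x_n]`. -/
theorem strict_monomials_span (n : ℕ) (hn : 1 ≤ n) :
    Submodule.span (Sring n)
        (Set.range fun μ : Fin n → Bool =>
          Ideal.Quotient.mk (Irel n) (Xmon n (strictExp n μ))) = ⊤ :=
  strict_monomials_span_general n

end
end

section
/- R_n is a free module over S = ℤ[x_1,…,x_n] with basis the monomials X^λ for λ ∈ SP_n; in particular R_n is a free S-module of rank 2^n. -/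
open Finset

noncomputable section

/-!
Give `X_i` the weight `w(i) = i (2n + 1 - i)`. Since `w` is strictly concave, every monomial
`X_a X_b` occurring in `X_{k,k} - X_k²` is lighter than `X_k²`, so the relations are rewriting
rules `X_k² ↦ (lighter terms)` and every monomial rewrites to a squarefree one: the squarefree
monomials span `R_n`. The leading monomials `X_k²` are pairwise coprime, so rewriting is confluent
(diamond lemma): rewriting `X_j²` first or `X_k²` first leads to the same result. Hence the normal
form is a well-defined `S`-linear map that kills `I_n` and fixes squarefree monomials, which gives
their linear independence in the quotient.
-/

open MvPolynomial

lemma MvPolynomial.monomial_eq_smul_monomial_one {σ A : Type*} [CommSemiring A] (e : σ →₀ ℕ)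
    (c : A) : (monomial e c : MvPolynomial σ A) = c • monomial e 1 := by
  rw [smul_monomial, smul_eq_mul, mul_one]

lemma MvPolynomial.mem_restrictSupport_of_isWeightedHomogeneous {σ R : Type*} [CommSemiring R]
    {w : σ → ℕ} {p : MvPolynomial σ R} {d N : ℕ} (hp : IsWeightedHomogeneous w p d)
    (hd : d < N) : p ∈ restrictSupport R {m | Finsupp.weight w m < N} := fun m hm => by
  rw [Set.mem_ofPred_eq, hp (mem_support_iff.mp hm)]
  exact hd

def squarefreeExponent {σ : Type*} [Finite σ] (μ : σ → Bool) : σ →₀ ℕ :=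
  Finsupp.equivFunOnFinite.symm fun i => if μ i then 1 else 0

lemma squarefreeExponent_apply {σ : Type*} [Finite σ] (μ : σ → Bool) (i : σ) :
    squarefreeExponent μ i = if μ i then 1 else 0 := rfl

lemma squarefreeExponent_injective {σ : Type*} [Finite σ] :
    Function.Injective (squarefreeExponent (σ := σ)) := by
  intro μ ν h
  funext i
  have := DFunLike.congr_fun h i
  rw [squarefreeExponent_apply, squarefreeExponent_apply] at this
  cases hμ : μ i <;> cases hν : ν i <;> simp_all

def squarefreeMonomial {σ A : Type*} [CommSemiring A] [Finite σ] (μ : σ → Bool) :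
    MvPolynomial σ A :=
  monomial (squarefreeExponent μ) 1

/-- A rewriting system `X_j² ↦ tail j` on `A[σ]` in which every rewrite lowers the weight. -/
structure SquareReduction (σ A : Type*) [CommRing A] where
  weight : σ → ℕ
  tail : σ → MvPolynomial σ A
  weight_lt : ∀ j, ∀ m ∈ (tail j).support, Finsupp.weight weight m < 2 * weight j

namespace SquareReduction

variable {σ A : Type*} [CommRing A] (R : SquareReduction σ A)

def ideal : Ideal (MvPolynomial σ A) :=
  Ideal.span (Set.range fun j => X j ^ 2 - R.tail j)

lemma X_sq_sub_tail_mem_ideal (j : σ) : X j ^ 2 - R.tail j ∈ R.ideal :=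
  Ideal.subset_span ⟨j, rfl⟩

lemma mkₐ_mul_X_sq (p : MvPolynomial σ A) (j : σ) :
    Ideal.Quotient.mkₐ A R.ideal (p * X j ^ 2) =
      Ideal.Quotient.mkₐ A R.ideal (p * R.tail j) := by
  rw [Ideal.Quotient.mkₐ_eq_mk, Ideal.Quotient.eq, ← mul_sub]
  exact Ideal.mul_mem_left _ _ (R.X_sq_sub_tail_mem_ideal j)

lemma weight_tsub_single_add {e : σ →₀ ℕ} {j : σ} (hj : 2 ≤ e j) :
    Finsupp.weight R.weight (e - Finsupp.single j 2) + 2 * R.weight j =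
      Finsupp.weight R.weight e := by
  conv_rhs => rw [← tsub_add_cancel_of_le (Finsupp.single_le_iff.mpr hj)]
  rw [map_add, Finsupp.weight_single, smul_eq_mul]

lemma weight_tsub_single_add_lt {e : σ →₀ ℕ} {j : σ} (hj : 2 ≤ e j) {m : σ →₀ ℕ}
    (hm : m ∈ (R.tail j).support) :
    Finsupp.weight R.weight (e - Finsupp.single j 2 + m) < Finsupp.weight R.weight e := by
  have := R.weight_lt j m hm
  have := R.weight_tsub_single_add hj
  rw [map_add]
  omega

lemma weight_lt_of_mem_support_monomial_mul_tail {d m : σ →₀ ℕ} {j : σ}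
    (hm : m ∈ (monomial d 1 * R.tail j).support) :
    Finsupp.weight R.weight m < Finsupp.weight R.weight d + 2 * R.weight j := by
  rw [mem_support_iff, coeff_monomial_mul'] at hm
  split_ifs at hm with hdm
  · have := R.weight_lt j (m - d) (mem_support_iff.mpr (by simpa using hm))
    rw [← add_tsub_cancel_of_le hdm, map_add]
    omega
  · exact absurd rfl hm

/-- The normal form of `x^e`, obtained by first rewriting some square `X_j² ∣ x^e`; that the
choice of `j` does not matter is `normalForm_monomial_mul_X_sq`. -/
def reduceMonomial (e : σ →₀ ℕ) : MvPolynomial σ A :=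
  open Classical in
  if h : ∃ j, 2 ≤ e j then
    ∑ m ∈ (R.tail h.choose).support.attach,
      coeff m.1 (R.tail h.choose) • reduceMonomial (e - Finsupp.single h.choose 2 + m.1)
  else monomial e 1
termination_by Finsupp.weight R.weight e
decreasing_by exact R.weight_tsub_single_add_lt h.choose_spec m.2

def normalForm : MvPolynomial σ A →ₗ[A] MvPolynomial σ A :=
  (basisMonomials σ A).constr A R.reduceMonomial

lemma normalForm_monomial (e : σ →₀ ℕ) (c : A) :
    R.normalForm (monomial e c) = c • R.reduceMonomial e := by
  have : monomial e 1 = basisMonomials σ A e := by rw [coe_basisMonomials]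
  rw [monomial_eq_smul_monomial_one, map_smul, normalForm, this, Module.Basis.constr_basis]

lemma normalForm_monomial_mul (d : σ →₀ ℕ) (p : MvPolynomial σ A) :
    R.normalForm (monomial d 1 * p) =
      ∑ m ∈ p.support, coeff m p • R.reduceMonomial (d + m) := by
  conv_lhs => rw [p.as_sum, mul_sum]
  simp only [monomial_mul, one_mul, map_sum, normalForm_monomial]

lemma reduceMonomial_of_exists {e : σ →₀ ℕ} (h : ∃ j, 2 ≤ e j) :
    R.reduceMonomial e =
      R.normalForm (monomial (e - Finsupp.single h.choose 2) 1 * R.tail h.choose) := by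
  rw [reduceMonomial, dif_pos h, normalForm_monomial_mul]
  exact sum_attach _ (fun m => coeff m _ • R.reduceMonomial (_ + m))

lemma reduceMonomial_of_forall {e : σ →₀ ℕ} (h : ∀ j, e j < 2) :
    R.reduceMonomial e = monomial e 1 := by
  rw [reduceMonomial, dif_neg (by simpa using h)]

lemma normalForm_mul_X_sq_of_forall {q : MvPolynomial σ A} {j : σ}
    (h : ∀ m ∈ q.support,
      R.normalForm (monomial m 1 * X j ^ 2) = R.normalForm (monomial m 1 * R.tail j)) :
    R.normalForm (q * X j ^ 2) = R.normalForm (q * R.tail j) := by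
  conv_lhs => rw [q.as_sum]
  conv_rhs => rw [q.as_sum]
  simp only [sum_mul, map_sum]
  refine sum_congr rfl fun m hm => ?_
  rw [monomial_eq_smul_monomial_one, smul_mul_assoc, smul_mul_assoc, map_smul, map_smul, h m hm]

theorem normalForm_monomial_mul_X_sq (d : σ →₀ ℕ) (j : σ) :
    R.normalForm (monomial d 1 * X j ^ 2) = R.normalForm (monomial d 1 * R.tail j) := by
  induction hN : Finsupp.weight R.weight d + 2 * R.weight j using Nat.strong_induction_on
    generalizing d j with
  | _ N ih =>
  have ih' : ∀ (q : MvPolynomial σ A) (i : σ),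
      (∀ m ∈ q.support, Finsupp.weight R.weight m + 2 * R.weight i < N) →
        R.normalForm (q * X i ^ 2) = R.normalForm (q * R.tail i) :=
    fun q i hq => R.normalForm_mul_X_sq_of_forall fun m hm => ih _ (hq m hm) m i rfl
  have hex : ∃ i, 2 ≤ (d + Finsupp.single j 2 : σ →₀ ℕ) i := ⟨j, by simp⟩
  rw [X_pow_eq_monomial, monomial_mul, one_mul, normalForm_monomial, one_smul,
    reduceMonomial_of_exists _ hex]
  have hspec := hex.choose_spec
  generalize hex.choose = j₀ at hspec ⊢
  by_cases hj : j₀ = j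
  · rw [hj, add_tsub_cancel_right]
  have h₀ : 2 ≤ d j₀ := by simpa [Finsupp.single_apply, Ne.symm hj] using hspec
  have hweight := R.weight_tsub_single_add h₀
  set d' := d - Finsupp.single j₀ 2
  have hd : d = d' + Finsupp.single j₀ 2 :=
    (tsub_add_cancel_of_le (Finsupp.single_le_iff.mpr h₀)).symm
  have hd' : d + Finsupp.single j 2 - Finsupp.single j₀ 2 = d' + Finsupp.single j 2 := by
    rw [hd, add_right_comm, add_tsub_cancel_right]
  -- Diamond: rewriting `X_j²` or `X_{j₀}²` first in `x^{d'} X_j² X_{j₀}²` both lead to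
  -- `x^{d'} · tail j₀ · tail j`, by the induction hypothesis for lighter monomials.
  calc R.normalForm (monomial (d + Finsupp.single j 2 - Finsupp.single j₀ 2) 1 * R.tail j₀)
      = R.normalForm (monomial d' 1 * R.tail j₀ * X j ^ 2) := by
        rw [hd', X_pow_eq_monomial, mul_right_comm, monomial_mul, one_mul]
    _ = R.normalForm (monomial d' 1 * R.tail j₀ * R.tail j) :=
        ih' _ j fun m hm => by have := R.weight_lt_of_mem_support_monomial_mul_tail hm; omega
    _ = R.normalForm (monomial d' 1 * R.tail j * R.tail j₀) := by rw [mul_right_comm]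
    _ = R.normalForm (monomial d' 1 * R.tail j * X j₀ ^ 2) := by
        refine (ih' _ j₀ fun m hm => ?_).symm
        have := R.weight_lt_of_mem_support_monomial_mul_tail hm
        omega
    _ = R.normalForm (monomial d 1 * R.tail j) := by
        rw [hd, X_pow_eq_monomial, mul_right_comm, monomial_mul, one_mul]

theorem normalForm_mul_X_sq (p : MvPolynomial σ A) (j : σ) :
    R.normalForm (p * X j ^ 2) = R.normalForm (p * R.tail j) :=
  R.normalForm_mul_X_sq_of_forall fun m _ => R.normalForm_monomial_mul_X_sq m j

theorem normalForm_eq_zero_of_mem_ideal {p : MvPolynomial σ A} (hp : p ∈ R.ideal) :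
    R.normalForm p = 0 := by
  obtain ⟨c, rfl⟩ := Finsupp.mem_ideal_span_range_iff_exists_finsupp.mp hp
  simp [Finsupp.sum, mul_sub, normalForm_mul_X_sq]

section Finite

variable [Finite σ]

theorem normalForm_squarefreeMonomial (μ : σ → Bool) :
    R.normalForm (squarefreeMonomial μ) = squarefreeMonomial μ := by
  rw [squarefreeMonomial, normalForm_monomial, one_smul, reduceMonomial_of_forall]
  intro i
  rw [squarefreeExponent_apply]
  split_ifs <;> omega

theorem mkₐ_monomial_mem_span_squarefree (e : σ →₀ ℕ) :
    Ideal.Quotient.mkₐ A R.ideal (monomial e 1) ∈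
      Submodule.span A (Set.range (Ideal.Quotient.mkₐ A R.ideal ∘ squarefreeMonomial)) := by
  induction hN : Finsupp.weight R.weight e using Nat.strong_induction_on generalizing e with
  | _ N ih =>
  by_cases h : ∃ j, 2 ≤ e j
  · obtain ⟨j, hj⟩ := h
    have hweight := R.weight_tsub_single_add hj
    have he : monomial e (1 : A) = monomial (e - Finsupp.single j 2) 1 * X j ^ 2 := by
      rw [X_pow_eq_monomial, monomial_mul, one_mul,
        tsub_add_cancel_of_le (Finsupp.single_le_iff.mpr hj)]
    rw [he, mkₐ_mul_X_sq, as_sum (monomial (e - Finsupp.single j 2) (1 : A) * R.tail j),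
      map_sum]
    refine Submodule.sum_mem _ fun m hm => ?_
    have := R.weight_lt_of_mem_support_monomial_mul_tail hm
    rw [monomial_eq_smul_monomial_one, map_smul]
    exact Submodule.smul_mem _ _ (ih _ (by omega) m rfl)
  · have he : e = squarefreeExponent fun i => decide (e i = 1) := by
      ext i
      have : e i < 2 := not_le.mp fun hi => h ⟨i, hi⟩
      rw [squarefreeExponent_apply]
      split_ifs with hi <;> simp at hi <;> omega
    rw [he]
    exact Submodule.subset_span ⟨_, rfl⟩

theorem span_squarefree_eq_top :
    Submodule.span A (Set.range (Ideal.Quotient.mkₐ A R.ideal ∘ squarefreeMonomial)) = ⊤ := by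
  rw [eq_top_iff]
  rintro x -
  obtain ⟨p, rfl⟩ := Ideal.Quotient.mkₐ_surjective A R.ideal x
  rw [p.as_sum, map_sum]
  refine Submodule.sum_mem _ fun e _ => ?_
  rw [monomial_eq_smul_monomial_one, map_smul]
  exact Submodule.smul_mem _ _ (R.mkₐ_monomial_mem_span_squarefree e)

theorem linearIndependent_squarefree :
    LinearIndependent A (Ideal.Quotient.mkₐ A R.ideal ∘ squarefreeMonomial) := by
  have hli : LinearIndependent A (squarefreeMonomial : (σ → Bool) → MvPolynomial σ A) :=
    (basisMonomials σ A).linearIndependent.comp squarefreeExponent squarefreeExponent_injective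
  refine hli.map (f := (Ideal.Quotient.mkₐ A R.ideal).toLinearMap) ?_
  have hfix : Set.EqOn R.normalForm (LinearMap.id (R := A))
      (Submodule.span A (Set.range (squarefreeMonomial : _ → MvPolynomial σ A))) :=
    LinearMap.eqOn_span' (Set.forall_mem_range.mpr R.normalForm_squarefreeMonomial)
  rw [Submodule.disjoint_def]
  intro p hp hker
  rw [LinearMap.mem_ker, AlgHom.toLinearMap_apply, Ideal.Quotient.mkₐ_eq_mk,
    Ideal.Quotient.eq_zero_iff_mem] at hker
  rw [← LinearMap.id_apply (R := A) p, ← hfix hp, R.normalForm_eq_zero_of_mem_ideal hker]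

def basis : Module.Basis (σ → Bool) A (MvPolynomial σ A ⧸ R.ideal) :=
  Module.Basis.mk R.linearIndependent_squarefree R.span_squarefree_eq_top.ge

theorem basis_apply (μ : σ → Bool) :
    R.basis μ = Ideal.Quotient.mk R.ideal (squarefreeMonomial μ) := by
  rw [basis, Module.Basis.mk_apply, Function.comp_apply, Ideal.Quotient.mkₐ_eq_mk]

end Finite

end SquareReduction

def indexWeight (n j : ℕ) : ℕ := j * (2 * n + 1 - j)

lemma indexWeight_add_lt {n a b k : ℕ} (han : a ≤ n) (hbk : b < k) (hka : k ≤ a)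
    (hab : a + b ≤ 2 * k) :
    indexWeight n a + indexWeight n b < 2 * indexWeight n k := by
  unfold indexWeight
  zify [show a ≤ 2 * n + 1 by omega, show b ≤ 2 * n + 1 by omega, show k ≤ 2 * n + 1 by omega]
  have hs : (0 : ℤ) ≤ 2 * k - a - b := by omega
  have hk : (0 : ℤ) ≤ n - k := by omega
  have hba : (b : ℤ) < a := by omega
  nlinarith [mul_nonneg hs hk]

abbrev generatorWeight (n : ℕ) : Fin n → ℕ := fun i => indexWeight n (i.val + 1)

lemma isWeightedHomogeneous_XV (n a : ℕ) :
    IsWeightedHomogeneous (generatorWeight n) (XV n a) (indexWeight n a) := by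
  unfold XV
  split_ifs with h0 h
  · rw [h0, indexWeight, zero_mul]
    exact isWeightedHomogeneous_one _ _
  · convert isWeightedHomogeneous_X (Sring n) (generatorWeight n) ⟨a - 1, by omega⟩
    rw [Fin.val_mk]
    omega
  · exact isWeightedHomogeneous_zero _ _ _

lemma C_mul_XV_mul_XV_mem_restrictSupport {n a b k : ℕ} (c : Sring n) (han : a ≤ n)
    (hbk : b < k) (hka : k ≤ a) (hab : a + b ≤ 2 * k) :
    C c * XV n a * XV n b ∈ restrictSupport (Sring n)
      {m | Finsupp.weight (generatorWeight n) m < 2 * indexWeight n k} :=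
  mem_restrictSupport_of_isWeightedHomogeneous
    (((isWeightedHomogeneous_XV n a).C_mul c).mul (isWeightedHomogeneous_XV n b))
    (indexWeight_add_lt han hbk hka hab)

lemma XKK_sub_XV_sq_mem_restrictSupport {n k : ℕ} (hk1 : 1 ≤ k) (hkn : k ≤ n) :
    XKK n k - XV n k ^ 2 ∈ restrictSupport (Sring n)
      {m | Finsupp.weight (generatorWeight n) m < 2 * indexWeight n k} := by
  have hXKK : XKK n k - XV n k ^ 2 =
      ∑ i ∈ Icc 1 (min (n - k) k), C (2 * (-1) ^ i) * XV n (k + i) * XV n (k - i) +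
      ∑ r ∈ Icc k (min n (2 * k - 1)), ∑ s ∈ range (2 * k - 1 - r + 1),
        C (iotaA n (fco k k r s)) * XV n r * XV n s := by
    have hterm : ∀ i, (2 : PRing n) * ((-1) ^ i * XV n (k + i) * XV n (k - i)) =
        C (2 * (-1) ^ i) * XV n (k + i) * XV n (k - i) := fun i => by
      simp only [map_mul, map_pow, map_neg, map_one, map_ofNat]
      ring
    simp only [XKK, add_assoc, add_sub_cancel_left, mul_sum, hterm]
  rw [hXKK]
  refine add_mem (sum_mem fun i hi => ?_) (sum_mem fun r hr => sum_mem fun s hs => ?_)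
  · rw [mem_Icc] at hi
    exact C_mul_XV_mul_XV_mem_restrictSupport _ (by omega) (by omega) (by omega) (by omega)
  · rw [mem_Icc] at hr
    rw [mem_range] at hs
    exact C_mul_XV_mul_XV_mem_restrictSupport _ (by omega) (by omega) (by omega) (by omega)

def xkkReduction (n : ℕ) : SquareReduction (Fin n) (Sring n) where
  weight := generatorWeight n
  tail j := X j ^ 2 - XKK n (j + 1)
  weight_lt j := by
    have hX : (X j : PRing n) = XV n (j + 1) := by
      simp [XV, Nat.lt_iff_add_one_le.mp j.isLt]
    rw [hX, ← neg_sub, support_neg]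
    exact XKK_sub_XV_sq_mem_restrictSupport (Nat.le_add_left 1 j) j.isLt

lemma ideal_xkkReduction (n : ℕ) : (xkkReduction n).ideal = Irel n := by
  rw [SquareReduction.ideal, Irel]
  congr 1
  ext p
  simp only [xkkReduction, sub_sub_cancel, Set.mem_range, Set.mem_image, Set.mem_Icc]
  constructor
  · rintro ⟨j, rfl⟩
    exact ⟨j + 1, ⟨by omega, j.isLt⟩, rfl⟩
  · rintro ⟨k, ⟨hk1, hkn⟩, rfl⟩
    exact ⟨⟨k - 1, by omega⟩, by simp [Nat.sub_add_cancel hk1]⟩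

lemma Xmon_strictExp {n : ℕ} (μ : Fin n → Bool) :
    Xmon n (strictExp n μ) = squarefreeMonomial μ := by
  rw [squarefreeMonomial, monomial_eq, C_1, one_mul, Finsupp.prod_fintype _ _ fun i => pow_zero _]
  rfl

theorem strict_monomials_basis_general (n : ℕ) :
    (∃ b : Module.Basis (Fin n → Bool) (Sring n) (PRing n ⧸ Irel n),
      ∀ μ : Fin n → Bool,
        b μ = Ideal.Quotient.mk (Irel n) (Xmon n (strictExp n μ))) ∧
    Fintype.card (Fin n → Bool) = 2 ^ n := by
  refine ⟨?_, by simp⟩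
  simp only [Xmon_strictExp]
  rw [← ideal_xkkReduction]
  exact ⟨_, (xkkReduction n).basis_apply⟩

/-- `R_n = S[X_1,…,X_n]/I_n` is a free module over `S = ℤ[x_1,…,x_n]` with basis the
monomials `X^λ` for `λ ∈ SP_n` (strict partitions, encoded by their sets of parts
`μ : Fin n → Bool`); in particular `R_n` is a free `S`-module of rank `2^n`. -/
theorem strict_monomials_basis (n : ℕ) (hn : 1 ≤ n) :
    (∃ b : Module.Basis (Fin n → Bool) (Sring n) (PRing n ⧸ Irel n),
      ∀ μ : Fin n → Bool,
        b μ = Ideal.Quotient.mk (Irel n) (Xmon n (strictExp n μ))) ∧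
    Fintype.card (Fin n → Bool) = 2 ^ n :=
  strict_monomials_basis_general n

end
end
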